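/- Under the Setup, x_2 ∈ EPN(x_2', X_2), and x_2' is the only vertex of X_2 that has an X_2-external private neighbour. -/

import Mathlib

open SimpleGraph

section IRDefs

variable {V : Type*}

/-- `w` is a `D`-private neighbour of `v`: `w` is dominated by `v` but by no other
vertex of `D`. -/
def IsPrivateNbr (G : SimpleGraph V) (D : Set V) (v w : V) : Prop :=
  (w = v ∨ G.Adj v w) ∧ ∀ u ∈ D, u ≠ v → ¬(w = u ∨ G.Adj u w)

/-- The set `PN(v, D)` of `D`-private neighbours of `v`. -/
def PN (G : SimpleGraph V) (v : V) (D : Set V) : Set V := {w | IsPrivateNbr G D v w}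

/-- The set `EPN(v, D) = PN(v, D) − D` of external `D`-private neighbours of `v`. -/
def EPN (G : SimpleGraph V) (v : V) (D : Set V) : Set V := PN G v D \ D

/-- A set `D` is irredundant if every vertex of `D` has a `D`-private neighbour. -/
def Irredundant (G : SimpleGraph V) (D : Set V) : Prop := ∀ v ∈ D, (PN G v D).Nonempty

/-- The upper irredundance number `IR(G)`. -/
noncomputable def IRnum (G : SimpleGraph V) : ℕ :=
  sSup {n | ∃ D : Set V, Irredundant G D ∧ D.ncard = n}

/-- An `IR(G)`-set: an irredundant set of maximum cardinality `IR(G)`. -/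
def IsIRSet (G : SimpleGraph V) (D : Set V) : Prop :=
  Irredundant G D ∧ D.ncard = IRnum G

/-- The `IR`-graph of `G`: vertices are the `IR(G)`-sets, and `D` is adjacent to `D'`
iff `D' = (D − {u}) ∪ {v}` for some `u ∈ D` and `v ∈ D' − {u}` with `uv ∈ E(G)`. -/
def IRGraph (G : SimpleGraph V) [Fintype V] :
    SimpleGraph {D : Set V // IsIRSet G D} where
  Adj D D' := ∃ a b, a ∈ D.1 ∧ b ∈ D'.1 ∧ b ≠ a ∧ G.Adj a b ∧ D'.1 = (D.1 \ {a}) ∪ {b}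
  symm := by
    constructor
    rintro ⟨D, hD⟩ ⟨D', hD'⟩ ⟨a, b, ha, hb, hba, hadj, heq⟩
    dsimp only at ha hb heq ⊢
    have hbD : b ∉ D := by
      intro hbD
      have h1 : D' = D \ {a} := by
        rw [heq]
        ext x
        simp only [Set.mem_union, Set.mem_diff, Set.mem_singleton_iff]
        constructor
        · rintro (h | rfl)
          · exact h
          · exact ⟨hbD, hba⟩
        · exact Or.inl
      have h2 : D'.ncard = D.ncard - 1 := by
        rw [h1, Set.ncard_diff_singleton_of_mem ha]
      have h3 : D.ncard = D'.ncard := by rw [hD.2, hD'.2]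
      have h4 : 0 < D.ncard := (Set.ncard_pos (Set.toFinite D)).2 ⟨a, ha⟩
      omega
    refine ⟨b, a, hb, ha, fun h => hba h.symm, hadj.symm, ?_⟩
    rw [heq]
    ext x
    simp only [Set.mem_union, Set.mem_diff, Set.mem_singleton_iff]
    constructor
    · intro hx
      by_cases hxa : x = a
      · exact Or.inr hxa
      · have hxb : x ≠ b := fun h => hbD (h ▸ hx)
        exact Or.inl ⟨Or.inl ⟨hx, hxa⟩, hxb⟩
    · rintro (⟨(⟨hx, _⟩ | rfl), hxb⟩ | rfl)
      · exact hx
      · exact absurd rfl hxb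
      · exact ha
  loopless := by
    constructor
    rintro ⟨D, hD⟩ ⟨a, b, ha, hb, hba, hadj, heq⟩
    dsimp only at ha hb heq
    have h2 : a ∈ (D \ {a}) ∪ {b} := heq ▸ ha
    rcases h2 with h | h
    · exact h.2 rfl
    · exact hba h.symm

end IRDefs

/-!
Exchanging a vertex `a` of an `IR`-set for a neighbour of `a` that is one of its private
neighbours is an edge of the `IR`-graph. Each claim is proved by finding four such exchanges
that close up into a 4-cycle, which a tree does not contain.

If `ab` were the only edge of an `IR`-set `D`, the private neighbours `a'`, `b'` of `a`, `b`
would be external and `D`, `D - a + a'`, `D - a - b + a' + b'`, `D - b + b'` would be such a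
cycle. So no `IR`-set spans exactly one edge; as the only possible edges of `X₁` and `X₂` are
`x₂x₃` and `x₁'x₂'`, both sets are independent. Hence `x₂` is an external `X₂`-private neighbour of `x₂'`, and if some `w ≠ x₂'` of
`X₂` had one, `z`, then `X₁`, `X₂`, `X₂ - w + z`, `X₁ - w + z` would be a 4-cycle.
-/

namespace SimpleGraph

variable {W : Type*} {T : SimpleGraph W}

theorem IsAcyclic.no_four_cycle (hT : T.IsAcyclic) {a b c d : W} (hab : T.Adj a b)
    (hbc : T.Adj b c) (hcd : T.Adj c d) (hda : T.Adj d a) (hac : a ≠ c) (hbd : b ≠ d) :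
    False := by
  have hpath : (Walk.cons hab (.cons hbc (.cons hcd (.cons hda .nil)))).IsPath :=
    (hT.isPath_iff_isChain _).2 (by simp [hab.ne, hbc.ne, hcd.ne, hac, hac.symm, hbd])
  simpa using Walk.isPath_iff_nil.1 hpath

end SimpleGraph

section Irredundance

variable {V : Type*} {G : SimpleGraph V} {D : Set V} {a b u v w z : V}

theorem not_adj_of_mem_PN (hw : w ∈ PN G v D) (hu : u ∈ D) (huv : u ≠ v) : ¬G.Adj u w :=
  fun h => hw.2 u hu huv (Or.inr h)

theorem adj_of_mem_EPN (hw : w ∈ EPN G v D) (hv : v ∈ D) : G.Adj v w :=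
  hw.1.1.resolve_left (by rintro rfl; exact hw.2 hv)

theorem self_mem_PN (h : ∀ u ∈ D, u ≠ v → ¬G.Adj u v) : v ∈ PN G v D :=
  ⟨Or.inl rfl, fun u hu huv h' => h'.elim (fun e => huv e.symm) (h u hu huv)⟩

theorem mem_EPN_of_adj (hvw : G.Adj v w) (hw : w ∉ D) (h : ∀ u ∈ D, u ≠ v → ¬G.Adj u w) :
    w ∈ EPN G v D :=
  ⟨⟨Or.inr hvw, fun u hu huv h' => h'.elim (fun e => hw (e ▸ hu)) (h u hu huv)⟩, hw⟩

theorem mem_EPN_of_mem_PN (hw : w ∈ PN G v D) (hu : u ∈ D) (huv : u ≠ v) (hadj : G.Adj u v) :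
    w ∈ EPN G v D := by
  refine ⟨hw, fun hwD => ?_⟩
  obtain rfl | hwv := eq_or_ne w v
  · exact not_adj_of_mem_PN hw hu huv hadj
  · exact hw.2 w hwD hwv (Or.inl rfl)

theorem SimpleGraph.IsIndepSet.union_singleton_of_mem_PN {s : Set V} (hs : G.IsIndepSet s)
    (hsD : s ⊆ D \ {v}) (hw : w ∈ PN G v D) : G.IsIndepSet (s ∪ {w}) := by
  rw [Set.union_singleton]
  refine Set.Pairwise.insert hs fun u hu _ => ?_
  have hnadj := not_adj_of_mem_PN hw (hsD hu).1 (hsD hu).2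
  exact ⟨fun h => hnadj h.symm, hnadj⟩

theorem SimpleGraph.IsIndepSet.of_sdiff_singleton (ha : G.IsIndepSet (D \ {a}))
    (hb : G.IsIndepSet (D \ {b})) (hab : a ≠ b) (hnadj : ¬G.Adj a b) : G.IsIndepSet D := by
  intro u hu v hv huv
  by_cases hua : u ≠ a ∧ v ≠ a
  · exact ha ⟨hu, hua.1⟩ ⟨hv, hua.2⟩ huv
  by_cases hub : u ≠ b ∧ v ≠ b
  · exact hb ⟨hu, hub.1⟩ ⟨hv, hub.2⟩ huv
  obtain ⟨rfl, rfl⟩ | ⟨rfl, rfl⟩ : u = a ∧ v = b ∨ u = b ∧ v = a := by grind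
  · exact hnadj
  · exact fun h => hnadj h.symm

theorem SimpleGraph.IsIndepSet.irredundant (hD : G.IsIndepSet D) : Irredundant G D :=
  fun v hv => ⟨v, self_mem_PN fun _ hu huv => hD hu hv huv⟩

theorem mem_EPN_exchange (hD : G.IsIndepSet D) (ha : a ∈ D) (hab : G.Adj a b) :
    a ∈ EPN G b (D \ {a} ∪ {b}) := by
  refine mem_EPN_of_adj hab.symm (by simp [hab.ne]) ?_
  rintro u (hu | rfl) hub
  · exact hD hu.1 ha hu.2
  · exact absurd rfl hub

theorem irredundant_exchange_of_isIndepSet (hD : G.IsIndepSet D) (hw : w ∈ D) (hwz : G.Adj w z)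
    (h : ∀ v ∈ D \ {w}, G.Adj v z → (PN G v (D \ {w} ∪ {z})).Nonempty) :
    Irredundant G (D \ {w} ∪ {z}) := by
  rintro v (hv | rfl)
  · by_cases hvz : G.Adj v z
    · exact h v hv hvz
    refine ⟨v, self_mem_PN ?_⟩
    rintro u (hu | rfl) huv
    · exact hD hu.1 hv.1 huv
    · exact fun h => hvz h.symm
  · refine ⟨w, (mem_EPN_of_adj hwz.symm (by simp [hwz.ne]) ?_).1⟩
    rintro u (hu | rfl) huv
    · exact hD hu.1 hw hu.2
    · exact absurd rfl huv

theorem IsIRSet.of_exchange (hD : IsIRSet G D) (ha : a ∈ D) (hb : b ∉ D) {D' : Set V}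
    (hD' : D' = D \ {a} ∪ {b}) (hirr : Irredundant G D') : IsIRSet G D' :=
  ⟨hirr, by rw [hD', Set.union_singleton, Set.ncard_exchange hb ha, hD.2]⟩

variable [Fintype V]

theorem irGraph_adj_of_exchange {D' : Set V} (hD : IsIRSet G D) (hD' : IsIRSet G D')
    (ha : a ∈ D) (hab : G.Adj a b) (heq : D' = D \ {a} ∪ {b}) :
    (IRGraph G).Adj ⟨D, hD⟩ ⟨D', hD'⟩ :=
  ⟨a, b, ha, by simp [heq], hab.ne', hab, heq⟩

theorem not_adj_of_isAcyclic_irGraph (hT : (IRGraph G).IsAcyclic) (hD : IsIRSet G D)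
    (ha : a ∈ D) (hb : b ∈ D) (hDa : G.IsIndepSet (D \ {a})) (hDb : G.IsIndepSet (D \ {b})) :
    ¬G.Adj a b := by
  intro hab
  obtain ⟨a', ha'⟩ := hD.1 a ha
  obtain ⟨b', hb'⟩ := hD.1 b hb
  replace ha' : a' ∈ EPN G a D := mem_EPN_of_mem_PN ha' hb hab.ne' hab.symm
  replace hb' : b' ∈ EPN G b D := mem_EPN_of_mem_PN hb' ha hab.ne hab
  have haa' := adj_of_mem_EPN ha' ha
  have hbb' := adj_of_mem_EPN hb' hb
  have hba' : ¬G.Adj b a' := not_adj_of_mem_PN ha'.1 hb hab.ne'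
  have hab' : ¬G.Adj a b' := not_adj_of_mem_PN hb'.1 ha hab.ne
  have ha_ne_b' : a ≠ b' := ne_of_mem_of_not_mem ha hb'.2
  have hb_ne_a' : b ≠ a' := ne_of_mem_of_not_mem hb ha'.2
  set A := D \ {a} ∪ {a'} with hA_def
  set B := D \ {b} ∪ {b'}
  set F := A \ {b} ∪ {b'}
  have hAind : G.IsIndepSet A := hDa.union_singleton_of_mem_PN subset_rfl ha'.1
  have hBind : G.IsIndepSet B := hDb.union_singleton_of_mem_PN subset_rfl hb'.1
  have hbA : b ∈ A := Or.inl ⟨hb, hab.ne'⟩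
  have hb'A : b' ∉ A := by
    rintro (h | rfl)
    · exact hb'.2 h.1
    · exact hba' hbb'
  have hA := hD.of_exchange ha ha'.2 rfl hAind.irredundant
  have hB := hD.of_exchange hb hb'.2 rfl hBind.irredundant
  have hFirr : Irredundant G F := by
    refine irredundant_exchange_of_isIndepSet hAind hbA hbb' fun v hv hvb' => ⟨a, ?_⟩
    obtain rfl : a' = v := (hv.1.resolve_left fun hvD =>
      not_adj_of_mem_PN hb'.1 hvD.1 hv.2 hvb').symm
    refine (mem_EPN_of_adj haa'.symm
      (by simp [hA_def, hab.ne, haa'.ne, ha_ne_b']) ?_).1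
    rintro u (⟨(hu | rfl), hub⟩ | rfl) hua'
    · exact hDb ⟨hu.1, hub⟩ ⟨ha, hab.ne⟩ hu.2
    · exact absurd rfl hua'
    · exact fun h => hab' h.symm
  have hF := hA.of_exchange hbA hb'A rfl hFirr
  have hF_eq : F = B \ {a} ∪ {a'} := by ext; grind
  have haB : a ∈ B := Or.inl ⟨ha, hab.ne⟩
  exact hT.no_four_cycle (irGraph_adj_of_exchange hD hA ha haa' rfl)
    (irGraph_adj_of_exchange hA hF hbA hbb' rfl)
    (irGraph_adj_of_exchange hB hF haB haa' hF_eq).symm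
    (irGraph_adj_of_exchange hD hB hb hbb' rfl).symm
    (ne_of_apply_ne Subtype.val (ne_of_mem_of_not_mem' ha (by simp [ha_ne_b', haa'.ne])))
    (ne_of_apply_ne Subtype.val (ne_of_mem_of_not_mem' hbA (by simp [hbb'.ne])))

theorem IsIRSet.isIndepSet_of_isAcyclic_irGraph (hT : (IRGraph G).IsAcyclic)
    (hD : IsIRSet G D) (ha : a ∈ D) (hb : b ∈ D) (hab : a ≠ b) (hDa : G.IsIndepSet (D \ {a}))
    (hDb : G.IsIndepSet (D \ {b})) : G.IsIndepSet D :=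
  hDa.of_sdiff_singleton hDb hab (not_adj_of_isAcyclic_irGraph hT hD ha hb hDa hDb)

theorem EPN_eq_empty_of_isAcyclic_irGraph (hT : (IRGraph G).IsAcyclic) (hD : IsIRSet G D)
    (hDind : G.IsIndepSet D) (ha : a ∈ D) (hab : G.Adj a b)
    (hEind : G.IsIndepSet (D \ {a} ∪ {b})) (hw : w ∈ D \ {a} ∪ {b}) (hwb : w ≠ b) :
    EPN G w (D \ {a} ∪ {b}) = ∅ := by
  set E := D \ {a} ∪ {b} with hE_def
  refine Set.eq_empty_of_forall_notMem fun z hz => ?_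
  have hbD : b ∉ D := fun hbD => hDind ha hbD hab.ne hab
  have hwD : w ∈ D \ {a} := hw.resolve_right hwb
  have hwa : w ≠ a := hwD.2
  have hbE : b ∈ E := Or.inr rfl
  have hwz := adj_of_mem_EPN hz hw
  have hbz : ¬G.Adj b z := not_adj_of_mem_PN hz.1 hbE hwb.symm
  have hzD : z ∉ D := fun hzD => hz.2 (Or.inl ⟨hzD, by rintro rfl; exact hbz hab.symm⟩)
  have hb_ne_z : b ≠ z := ne_of_mem_of_not_mem hbE hz.2
  have hEw : G.IsIndepSet (E \ {w}) := Set.Pairwise.mono Set.sdiff_subset hEind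
  set Y := D \ {w} ∪ {z}
  set Z := E \ {w} ∪ {z} with hZ_def
  have hE : IsIRSet G E := hD.of_exchange ha hbD rfl hEind.irredundant
  have hZ : IsIRSet G Z := hE.of_exchange hw hz.2 rfl
    (hEw.union_singleton_of_mem_PN subset_rfl hz.1).irredundant
  have hYirr : Irredundant G Y := by
    refine irredundant_exchange_of_isIndepSet hDind hwD.1 hwz fun v hv hvz => ⟨b, ?_⟩
    obtain rfl : a = v := by
      by_contra hav
      exact not_adj_of_mem_PN hz.1 (Or.inl ⟨hv.1, Ne.symm hav⟩) hv.2 hvz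
    refine (mem_EPN_of_adj hab (by simp [hbD, hb_ne_z]) ?_).1
    rintro u (hu | rfl) hua
    · exact hEind (Or.inl ⟨hu.1, hua⟩) hbE (ne_of_mem_of_not_mem hu.1 hbD)
    · exact fun h => hbz h.symm
  have hY := hD.of_exchange hwD.1 hzD rfl hYirr
  have hZ_eq : Z = Y \ {a} ∪ {b} := by ext; grind
  have haY : a ∈ Y := Or.inl ⟨ha, hwa.symm⟩
  exact hT.no_four_cycle (irGraph_adj_of_exchange hD hE ha hab rfl)
    (irGraph_adj_of_exchange hE hZ hw hwz rfl)
    (irGraph_adj_of_exchange hY hZ haY hab hZ_eq).symm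
    (irGraph_adj_of_exchange hD hY hwD.1 hwz rfl).symm
    (ne_of_apply_ne Subtype.val (ne_of_mem_of_not_mem' ha
      (by simp [hZ_def, hE_def, hab.ne, ne_of_mem_of_not_mem ha hzD])))
    (ne_of_apply_ne Subtype.val (ne_of_mem_of_not_mem' hbE (by simp [hbD, hb_ne_z])))

end Irredundance

theorem statement15_general {V : Type*} [Fintype V] (G : SimpleGraph V)
    (htree : (IRGraph G).IsTree)
    (X : Set V)
    (x1 x2 x3 x1' x2' : V)
    (hx2 : x2 ∈ X) (hx3 : x3 ∈ X)
    (h12 : x1 ≠ x2) (h13 : x1 ≠ x3) (h23 : x2 ≠ x3)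
    (hdeg : ∀ y ∈ X, (∃ z ∈ X, G.Adj y z) ↔ (y = x1 ∨ y = x2 ∨ y = x3))
    (hepn1 : x1' ∈ EPN G x1 X) (hepn2 : x2' ∈ EPN G x2 X)
    (X1 X2 : Set V)
    (hX1def : X1 = (X \ {x1}) ∪ {x1'})
    (hX2def : X2 = (X \ {x1, x2}) ∪ {x1', x2'})
    (hX1 : IsIRSet G X1) (hX2 : IsIRSet G X2) :
    x2 ∈ EPN G x2' X2 ∧
      ∀ w ∈ X2, (EPN G w X2).Nonempty → w = x2' := by
  have hx22' : G.Adj x2 x2' := adj_of_mem_EPN hepn2 hx2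
  have hx1'_ne_x2 : x1' ≠ x2 := (ne_of_mem_of_not_mem hx2 hepn1.2).symm
  have hx1'_ne_x2' : x1' ≠ x2' := by
    rintro rfl
    exact not_adj_of_mem_PN hepn1.1 hx2 h12.symm hx22'
  have hXind : ∀ y ∈ ({x2, x3} : Set V), G.IsIndepSet (X \ {x1, y}) := by
    intro y hy u hu v hv huv hadj
    have hu' := (hdeg u hu.1).1 ⟨v, hv.1, hadj⟩
    have hv' := (hdeg v hv.1).1 ⟨u, hu.1, hadj.symm⟩
    grind
  have hx2X1 : x2 ∈ X1 := by simp [hX1def, hx2, h12.symm]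
  have hx3X1 : x3 ∈ X1 := by simp [hX1def, hx3, h13.symm]
  have hX1a : G.IsIndepSet (X1 \ {x2}) := Set.Pairwise.mono (by grind)
    ((hXind x2 (by simp)).union_singleton_of_mem_PN (by grind) hepn1.1)
  have hX1b : G.IsIndepSet (X1 \ {x3}) := Set.Pairwise.mono (by grind)
    ((hXind x3 (by simp)).union_singleton_of_mem_PN (by grind) hepn1.1)
  have hX2a : G.IsIndepSet (X2 \ {x1'}) := Set.Pairwise.mono (by grind)
    ((hXind x2 (by simp)).union_singleton_of_mem_PN (by grind) hepn2.1)
  have hX2b : G.IsIndepSet (X2 \ {x2'}) := Set.Pairwise.mono (by grind)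
    ((hXind x2 (by simp)).union_singleton_of_mem_PN (by grind) hepn1.1)
  have hX1ind := hX1.isIndepSet_of_isAcyclic_irGraph htree.isAcyclic hx2X1 hx3X1 h23 hX1a hX1b
  have hX2ind := hX2.isIndepSet_of_isAcyclic_irGraph htree.isAcyclic (by simp [hX2def])
    (by simp [hX2def]) hx1'_ne_x2' hX2a hX2b
  obtain rfl : X1 \ {x2} ∪ {x2'} = X2 := by ext; grind
  refine ⟨mem_EPN_exchange hX1ind hx2X1 hx22', fun w hw hne => ?_⟩
  by_contra hwx2'
  exact hne.ne_empty (EPN_eq_empty_of_isAcyclic_irGraph htree.isAcyclic hX1 hX1ind hx2X1 hx22'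
    hX2ind hw hwx2')

/-- Under the Setup, `x₂ ∈ EPN(x₂', X₂)` and `x₂'` is the only vertex of `X₂`
with an `X₂`-external private neighbour. -/
theorem statement15 {V : Type*} [Fintype V] (G : SimpleGraph V)
    (htree : (IRGraph G).IsTree) (hdiam : (IRGraph G).diam = 3)
    (X : Set V) (hX : IsIRSet G X)
    (x1 x2 x3 x1' x2' x3' : V)
    (hx1 : x1 ∈ X) (hx2 : x2 ∈ X) (hx3 : x3 ∈ X)
    (h12 : x1 ≠ x2) (h13 : x1 ≠ x3) (h23 : x2 ≠ x3)
    (hdeg : ∀ y ∈ X, (∃ z ∈ X, G.Adj y z) ↔ (y = x1 ∨ y = x2 ∨ y = x3))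
    (hepn1 : x1' ∈ EPN G x1 X) (hepn2 : x2' ∈ EPN G x2 X) (hepn3 : x3' ∈ EPN G x3 X)
    (X1 X2 X' : Set V)
    (hX1def : X1 = (X \ {x1}) ∪ {x1'})
    (hX2def : X2 = (X \ {x1, x2}) ∪ {x1', x2'})
    (hX'def : X' = (X \ {x1, x2, x3}) ∪ {x1', x2', x3'})
    (hX1 : IsIRSet G X1) (hX2 : IsIRSet G X2) (hX' : IsIRSet G X')
    (hadj1 : (IRGraph G).Adj ⟨X, hX⟩ ⟨X1, hX1⟩)
    (hadj2 : (IRGraph G).Adj ⟨X1, hX1⟩ ⟨X2, hX2⟩)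
    (hadj3 : (IRGraph G).Adj ⟨X2, hX2⟩ ⟨X', hX'⟩)
    (hgeo : (IRGraph G).dist ⟨X, hX⟩ ⟨X', hX'⟩ = 3) :
    x2 ∈ EPN G x2' X2 ∧
      ∀ w ∈ X2, (EPN G w X2).Nonempty → w = x2' :=
  statement15_general G htree X x1 x2 x3 x1' x2' hx2 hx3 h12 h13 h23 hdeg hepn1 hepn2 X1 X2 hX1def
    hX2def hX1 hX2
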